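/- Let A be an algebra. If R ⊆ [R,R|1] holds for every reflexive compatible relation R on A, then for every congruence γ and all reflexive compatible relations S, T with S ∩ T⁻ ⊆ γ: γ ∩ (S∘T) ⊆ ((γ∩S) ∘ (γ∩T))*. -/

import Mathlib

open FirstOrder Language

universe u

/-- A binary relation on a structure `A` is compatible (admissible) if it is preserved
by every operation (function symbol) of the language. -/
def Compatible (L : Language) {A : Type u} [L.Structure A] (R : A → A → Prop) : Prop :=
  ∀ (n : ℕ) (f : L.Functions n) (a b : Fin n → A),
    (∀ i, R (a i) (b i)) → R (Structure.funMap f a) (Structure.funMap f b)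

/-- `(x, y; z, w) ∈ M(R, S)`: there is a term `t` and tuples `a R a'`, `b S b'` with
`x = t(a,b)`, `y = t(a,b')`, `z = t(a',b)`, `w = t(a',b')`. -/
def InM (L : Language) {A : Type u} [L.Structure A] (R S : A → A → Prop)
    (x y z w : A) : Prop :=
  ∃ (n m : ℕ) (t : L.Term (Fin n ⊕ Fin m)) (a a' : Fin n → A) (b b' : Fin m → A),
    (∀ i, R (a i) (a' i)) ∧ (∀ j, S (b j) (b' j)) ∧
      x = t.realize (Sum.elim a b) ∧ y = t.realize (Sum.elim a b') ∧
      z = t.realize (Sum.elim a' b) ∧ w = t.realize (Sum.elim a' b')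

/-- `[R, S | 1]`: the transitive closure of `{(z,w) : (x,x;z,w) ∈ M(R,S) for some x}`. -/
def comm1 (L : Language) {A : Type u} [L.Structure A] (R S : A → A → Prop) :
    A → A → Prop :=
  Relation.TransGen (fun z w => ∃ x, InM L R S x x z w)

/-- Relational composition. -/
def rcomp {A : Type u} (R S : A → A → Prop) : A → A → Prop :=
  fun a c => ∃ b, R a b ∧ S b c

/-- Converse of a relation. -/
def rconv {A : Type u} (R : A → A → Prop) : A → A → Prop := fun a b => R b a

/-- Intersection of relations. -/
def rinter {A : Type u} (R S : A → A → Prop) : A → A → Prop := fun a b => R a b ∧ S a b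

/-- A congruence: a compatible equivalence relation. -/
def IsCongruence (L : Language) {A : Type u} [L.Structure A] (θ : A → A → Prop) : Prop :=
  Equivalence θ ∧ Compatible L θ

/-- A tolerance: a reflexive symmetric compatible relation. -/
def IsTolerance (L : Language) {A : Type u} [L.Structure A] (T : A → A → Prop) : Prop :=
  Reflexive T ∧ Symmetric T ∧ Compatible L T

/-- `Cg R`: the smallest congruence containing `R` (intersection of all congruences ⊇ R). -/
def Cg (L : Language) {A : Type u} [L.Structure A] (R : A → A → Prop) : A → A → Prop :=
  fun a b => ∀ θ : A → A → Prop, IsCongruence L θ → (∀ x y, R x y → θ x y) → θ a b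

/-- `R°`: the smallest tolerance containing `R`. -/
def tolC (L : Language) {A : Type u} [L.Structure A] (R : A → A → Prop) : A → A → Prop :=
  fun a b => ∀ T : A → A → Prop, IsTolerance L T → (∀ x y, R x y → T x y) → T a b

/-- `K(R,S;V) = {(z,w) : ∃ x y, (x,y;z,w) ∈ M(R,S) ∧ x V y}`. -/
def Kop (L : Language) {A : Type u} [L.Structure A] (R S V : A → A → Prop) :
    A → A → Prop :=
  fun z w => ∃ x y, InM L R S x y z w ∧ V x y

/-- The join `γ ∨ D`: the smallest congruence containing both `γ` and `D`. -/
def cgJoin (L : Language) {A : Type u} [L.Structure A] (γ D : A → A → Prop) :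
    A → A → Prop :=
  fun a b => ∀ θ : A → A → Prop, IsCongruence L θ → (∀ x y, γ x y → θ x y) →
    (∀ x y, D x y → θ x y) → θ a b

variable {L : Language} {A : Type u} [L.Structure A]

section Compatible

variable {R S : A → A → Prop}

theorem Compatible.realize (hR : Compatible L R) {α : Type*} (t : L.Term α) {v v' : α → A}
    (hv : ∀ i, R (v i) (v' i)) : R (t.realize v) (t.realize v') := by
  induction t with
  | var i => exact hv i
  | func f ts ih => exact hR _ f _ _ fun i => ih i

theorem Compatible.realize_sumElim (hR : Compatible L R) {α β : Type*} (t : L.Term (α ⊕ β))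
    {a a' : α → A} {b b' : β → A} (ha : ∀ i, R (a i) (a' i)) (hb : ∀ j, R (b j) (b' j)) :
    R (t.realize (Sum.elim a b)) (t.realize (Sum.elim a' b')) :=
  hR.realize t fun | .inl i => ha i | .inr j => hb j

theorem Compatible.rinter (hR : Compatible L R) (hS : Compatible L S) :
    Compatible L (rinter R S) :=
  fun n f a b hab => ⟨hR n f a b fun i => (hab i).1, hS n f a b fun i => (hab i).2⟩

theorem Compatible.rcomp (hR : Compatible L R) (hS : Compatible L S) :
    Compatible L (rcomp R S) := by
  intro n f a b hab
  choose c hac hcb using hab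
  exact ⟨Structure.funMap f c, hR n f a c hac, hS n f c b hcb⟩

end Compatible

theorem InM.mono {R R' S S' : A → A → Prop} (hR : ∀ a b, R a b → R' a b)
    (hS : ∀ a b, S a b → S' a b) {x y z w : A} :
    InM L R S x y z w → InM L R' S' x y z w
  | ⟨n, m, t, a, a', b, b', ha, hb, hx⟩ =>
    ⟨n, m, t, a, a', b, b', fun i => hR _ _ (ha i), fun j => hS _ _ (hb j), hx⟩

/-- With `x = t(a, b) = t(a, b')`, choose `b S d T b'`: the middle point is `t(a', d)`, and
`S ∩ T⁻ ⊆ γ` applies to `x S t(a, d) T x`. -/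
theorem rcomp_rinter_of_inM_diag {γ S T : A → A → Prop} (hγ : IsCongruence L γ)
    (hSr : Reflexive S) (hSc : Compatible L S) (hTr : Reflexive T) (hTc : Compatible L T)
    (hST : ∀ a b, S a b ∧ rconv T a b → γ a b) {x z w : A}
    (hM : InM L γ (rinter γ (rcomp S T)) x x z w) :
    rcomp (rinter γ S) (rinter γ T) z w := by
  obtain ⟨n, m, t, a, a', b, b', ha, hb, hx, hx', rfl, rfl⟩ := hM
  have hbγ : ∀ j, γ (b j) (b' j) := fun j => (hb j).1
  choose d hbd hdb' using fun j => (hb j).2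
  obtain ⟨hγe, hγc⟩ := hγ
  have hxp : γ x (t.realize (Sum.elim a d)) :=
    hST _ _ ⟨hx ▸ hSc.realize_sumElim t (fun _ => hSr _) hbd,
      hx' ▸ hTc.realize_sumElim t (fun _ => hTr _) hdb'⟩
  have hzx : γ (t.realize (Sum.elim a' b)) x :=
    hx ▸ hγc.realize_sumElim t (fun i => hγe.symm (ha i)) (fun _ => hγe.refl _)
  have hpm : γ (t.realize (Sum.elim a d)) (t.realize (Sum.elim a' d)) :=
    hγc.realize_sumElim t ha (fun _ => hγe.refl _)
  have hzw : γ (t.realize (Sum.elim a' b)) (t.realize (Sum.elim a' b')) :=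
    hγc.realize_sumElim t (fun _ => hγe.refl _) hbγ
  have hzm := hγe.trans hzx (hγe.trans hxp hpm)
  exact ⟨t.realize (Sum.elim a' d),
    ⟨hzm, hSc.realize_sumElim t (fun _ => hSr _) hbd⟩,
    ⟨hγe.trans (hγe.symm hzm) hzw, hTc.realize_sumElim t (fun _ => hTr _) hdb'⟩⟩

theorem stmt16
    (h : ∀ R : A → A → Prop, Reflexive R → Compatible L R →
      ∀ a b, R a b → comm1 L R R a b) :
    ∀ γ : A → A → Prop, IsCongruence L γ →
      ∀ S T : A → A → Prop, Reflexive S → Compatible L S →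
        Reflexive T → Compatible L T →
        (∀ a b, S a b ∧ rconv T a b → γ a b) →
        ∀ a b, γ a b ∧ rcomp S T a b →
          Relation.TransGen (rcomp (rinter γ S) (rinter γ T)) a b := by
  intro γ hγ S T hSr hSc hTr hTc hST a b hab
  have hRr : Reflexive (rinter γ (rcomp S T)) := fun x => ⟨hγ.1.refl x, x, hSr x, hTr x⟩
  have hRc : Compatible L (rinter γ (rcomp S T)) := hγ.2.rinter (hSc.rcomp hTc)
  refine Relation.TransGen.mono (fun z w ⟨x, hM⟩ => ?_) a b (h _ hRr hRc a b hab)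
  exact rcomp_rinter_of_inM_diag hγ hSr hSc hTr hTc hST
    (hM.mono (fun _ _ hR => hR.1) fun _ _ => id)
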